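/- Suppose Assumption (A) holds and r(n−1) ≤ 1/10. Then for every sign vector s ∈ {−1,+1}^{n−1}, the vertex P^(s) satisfies P^(s)_1 < 0 and f(P^(s)) ∈ E ∩ int(H). -/

import Mathlib

open Matrix Polynomial Finset

noncomputable section

/-- The companion-type matrix of the `n`-dimensional border-collision normal form:
`(i,1)` entry is `-a i`, `(i,i+1)` entries are `1`, all other entries `0`. -/
def bcMat (n : ℕ) (a : Fin n → ℝ) : Matrix (Fin n) (Fin n) ℝ :=
  Matrix.of fun i j =>
    (if (j : ℕ) = 0 then -a i else 0) + (if (j : ℕ) = (i : ℕ) + 1 then 1 else 0)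

/-- The vector `b = (1,0,…,0)`. -/
def bcVec (n : ℕ) : Fin n → ℝ := fun i => if (i : ℕ) = 0 then 1 else 0

/-- `ρ` is an eigenvalue of `M` (of algebraic multiplicity one, automatic when `|ρ| > r`)
and all remaining eigenvalues of `M` over `ℂ`, counted with multiplicity,
have modulus at most `r`. -/
def specA (n : ℕ) (M : Matrix (Fin n) (Fin n) ℝ) (ρ r : ℝ) : Prop :=
  ∃ lam : Fin (n - 1) → ℂ,
    (∀ j, ‖lam j‖ ≤ r) ∧
      M.charpoly.map (algebraMap ℝ ℂ) =
        (X - C (ρ : ℂ)) * ∏ j : Fin (n - 1), (X - C (lam j))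

/-- Assumption (A). -/
def assumptionA (n : ℕ) (aL aR : Fin n → ℝ) (α β r : ℝ) : Prop :=
  1 < α ∧ 1 < β ∧ 0 < r ∧ r < 1 ∧
    specA n (bcMat n aL) α r ∧ specA n (bcMat n aR) (-β) r

/-- The border-collision normal form map `f`. -/
def bcf (n : ℕ) (aL aR : Fin n → ℝ) (x : Fin n → ℝ) : Fin n → ℝ :=
  if ∀ i : Fin n, (i : ℕ) = 0 → x i ≤ 0 then (bcMat n aL).mulVec x + bcVec n
  else (bcMat n aR).mulVec x + bcVec n

/-- The fixed point `Y = (I − A_L)⁻¹ b`. -/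
def Ypt (n : ℕ) (aL : Fin n → ℝ) : Fin n → ℝ :=
  ((1 - bcMat n aL)⁻¹).mulVec (bcVec n)

/-- The row vector `u = (α^{n-1}, …, α, 1)`. -/
def uvec (n : ℕ) (α : ℝ) : Fin n → ℝ := fun i => α ^ (n - 1 - (i : ℕ))

/-- The hyperplane `E = {x : uᵀ(x − Y) = 0}`. -/
def Eset (n : ℕ) (aL : Fin n → ℝ) (α : ℝ) : Set (Fin n → ℝ) :=
  {x | ∑ i : Fin n, uvec n α i * (x i - Ypt n aL i) = 0}

/-- The slab `H = {x : |x_i| ≤ M_i r^{i-1}, i = 2,…,n}` with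
`M_i = (2α/(α−1))·binom(n−1,i−1)`. -/
def Hset (n : ℕ) (α r : ℝ) : Set (Fin n → ℝ) :=
  {x | ∀ i : Fin n, 1 ≤ (i : ℕ) →
    |x i| ≤ 2 * α / (α - 1) * ((n - 1).choose (i : ℕ) : ℝ) * r ^ (i : ℕ)}

/-- The first component `C₁` of the point `C`. -/
def Cfirst (n : ℕ) (aL aR : Fin n → ℝ) (α : ℝ) : ℝ :=
  (1 - 1 / (1 - bcMat n aL).det +
      1 / (1 - bcMat n aL).det *
        ∑ k ∈ univ.filter (fun k : Fin n => 1 ≤ (k : ℕ)),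
          α ^ (-((k : ℕ) : ℤ)) *
            ∑ j ∈ univ.filter (fun j : Fin n => (k : ℕ) ≤ (j : ℕ)), aL j) /
    ∑ i : Fin n, α ^ (-((i : ℕ) : ℤ)) * aR i

/-- The point `C = (C₁, 0, …, 0)`. -/
def Cpt (n : ℕ) (aL aR : Fin n → ℝ) (α : ℝ) : Fin n → ℝ :=
  fun i => if (i : ℕ) = 0 then Cfirst n aL aR α else 0

/-- The polytope `Ω = Conv({C} ∪ (E ∩ H))`. -/
def OmegaSet (n : ℕ) (aL aR : Fin n → ℝ) (α r : ℝ) : Set (Fin n → ℝ) :=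
  convexHull ℝ ({Cpt n aL aR α} ∪ (Eset n aL α ∩ Hset n α r))

/-- The cone `Ψ` of scalar multiples of vectors `(1, m₁, …, m_{n-1})` with
`|m_i| ≤ N_i r^{i-1}`, `N_i = ((min(α,β)−1)/2)·binom(n−1,i−1)`. -/
def PsiSet (n : ℕ) (α β r : ℝ) : Set (Fin n → ℝ) :=
  {x | ∃ γ : ℝ, ∃ v : Fin n → ℝ,
    (∀ i : Fin n, (i : ℕ) = 0 → v i = 1) ∧
    (∀ i : Fin n, 1 ≤ (i : ℕ) →
      |v i| ≤ (min α β - 1) / 2 * ((n - 1).choose ((i : ℕ) - 1) : ℝ) * r ^ ((i : ℕ) - 1)) ∧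
    x = γ • v}

/-- `P` is the vertex `P^(s)`: the point of `E` whose `i`-th component, `i = 2,…,n`,
is `s_{i-1}·M_i r^{i-1}`. -/
def isVertexP (n : ℕ) (aL : Fin n → ℝ) (α r : ℝ) (s : Fin (n - 1) → ℝ)
    (P : Fin n → ℝ) : Prop :=
  P ∈ Eset n aL α ∧
    ∀ i : Fin n, ∀ _h : 1 ≤ (i : ℕ),
      P i = s ⟨(i : ℕ) - 1, by have := i.isLt; omega⟩ *
        (2 * α / (α - 1) * ((n - 1).choose (i : ℕ) : ℝ) * r ^ (i : ℕ))

/-- The `k`-th elementary symmetric polynomial of `η`. -/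
def esym {m : ℕ} (η : Fin m → ℂ) (k : ℕ) : ℂ :=
  ∑ t ∈ powersetCard k univ, ∏ j ∈ t, η j

end

/-!
Coordinates are numbered from 1 here and from 0 in the code.

Since `α` is a root of the characteristic polynomial `X^n + a_1 X^{n-1} + ⋯ + a_n` of the
companion matrix `A_L`, the vector `u = (α^{n-1}, …, α, 1)` is a left eigenvector: `uᵀ A_L = α uᵀ`.
As `Y` is the fixed point of `x ↦ A_L x + b`, this gives `uᵀ(A_L x + b − Y) = α uᵀ(x − Y)`, so the
left branch of `f` maps `E` into itself, and `uᵀY = α^{n-1} / (1 − α)`.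

For `x ∈ E ∩ H`, the identity `α^{n-1} x_1 = uᵀY − ∑_{i ≥ 2} α^{n-i} x_i` together with
`∑_{i ≥ 2} binom(n-1, i-1) r^{i-1} ≤ (1 + r)^{n-1} − 1 ≤ e^{1/10} − 1 ≤ 1/9` puts `x_1` within
`(2/9)/(α − 1)` of `−1/(α − 1)`. So `x_1 < 0` and `f` acts on `x` by its left branch.

Writing the characteristic polynomial as `(X − α) ∏ (X − λ_j)` gives
`a_i = (−1)^i (e_i(λ) + α e_{i-1}(λ))`, hence
`|a_i| ≤ binom(n-1, i) r^i + α binom(n-1, i-1) r^{i-1}`.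
Since `(f x)_i = −a_i x_1 + x_{i+1}` for `i ≥ 2` and `binom(n-1, i) r^i` is at most a tenth of
`binom(n-1, i-1) r^{i-1}`, the bound on `x_1` puts `f x` strictly inside `H`.
-/

open Filter Topology

section Companion

variable {R : Type*} [CommRing R]

/-- `bcMat` over an arbitrary commutative ring, so that its characteristic matrix can be
computed over `ℝ[X]`. -/
def companion (n : ℕ) (a : Fin n → R) : Matrix (Fin n) (Fin n) R :=
  Matrix.of fun i j =>
    (if (j : ℕ) = 0 then -a i else 0) + (if (j : ℕ) = (i : ℕ) + 1 then 1 else 0)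

theorem bcMat_eq_companion (n : ℕ) (a : Fin n → ℝ) : bcMat n a = companion n a := rfl

theorem companion_map {S : Type*} [CommRing S] (f : R →+* S) (n : ℕ) (a : Fin n → R) :
    f.mapMatrix (companion n a) = companion n (f ∘ a) := by
  ext i j
  simp only [RingHom.mapMatrix_apply, Matrix.map_apply, companion, Matrix.of_apply]
  split_ifs <;> simp

theorem scalar_sub_companion_apply (n : ℕ) (a : Fin n → R) (x : R) (i j : Fin n) :
    (scalar (Fin n) x - companion n a) i j =
      (if (i : ℕ) = j then x else 0) + (if (j : ℕ) = 0 then a i else 0) -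
        (if (j : ℕ) = i + 1 then 1 else 0) := by
  simp only [companion, Matrix.sub_apply, scalar_apply, diagonal_apply, of_apply, Fin.ext_iff]
  split_ifs <;> ring

theorem submatrix_last_last_scalar_sub_companion (n : ℕ) (a : Fin (n + 1) → R) (x : R) :
    (scalar (Fin (n + 1)) x - companion (n + 1) a).submatrix (Fin.last n).succAbove
      (Fin.last n).succAbove = scalar (Fin n) x - companion n (a ∘ Fin.castSucc) := by
  ext i j
  simp only [submatrix_apply, scalar_sub_companion_apply, Fin.succAbove_last, Fin.val_castSucc,
    Function.comp_apply]

theorem det_submatrix_last_zero_scalar_sub_companion (n : ℕ) (a : Fin (n + 1) → R) (x : R) :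
    ((scalar (Fin (n + 1)) x - companion (n + 1) a).submatrix (Fin.last n).succAbove
      (Fin.succAbove 0)).det = (-1) ^ n := by
  rw [det_of_isLowerTriangular _ fun i j hij => ?_]
  · simp only [submatrix_apply, scalar_sub_companion_apply, Fin.succAbove_last,
      Fin.succAbove_zero, Fin.val_castSucc, Fin.val_succ]
    simp
  · have : (i : ℕ) < j := hij
    simp only [submatrix_apply, scalar_sub_companion_apply, Fin.succAbove_last,
      Fin.succAbove_zero, Fin.val_castSucc, Fin.val_succ]
    rw [if_neg (by omega), if_neg (by omega), if_neg (by omega)]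
    simp

theorem det_scalar_sub_companion (n : ℕ) (a : Fin n → R) (x : R) :
    (scalar (Fin n) x - companion n a).det =
      x ^ n + ∑ i : Fin n, a i * x ^ (n - 1 - (i : ℕ)) := by
  induction n with
  | zero => simp
  | succ n ih =>
    have hrow (j : Fin (n + 1)) : (scalar (Fin (n + 1)) x - companion (n + 1) a) (Fin.last n) j =
        (if j = 0 then a (Fin.last n) else 0) + (if j = Fin.last n then x else 0) := by
      have : (j : ℕ) ≠ n + 1 := by omega
      simp only [scalar_sub_companion_apply, Fin.val_last, if_neg this, Fin.ext_iff, Fin.val_zero,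
        eq_comm (a := n)]
      ring
    have hshift (i : Fin n) : x * (a i.castSucc * x ^ (n - 1 - (i : ℕ))) =
        a i.castSucc * x ^ (n + 1 - 1 - (i : ℕ)) := by
      rw [show n + 1 - 1 - (i : ℕ) = n - 1 - i + 1 by omega]
      ring
    have hsign : ((-1 : R) ^ n) * (-1) ^ n = 1 := by rw [← mul_pow]; simp
    simp only [det_succ_row _ (Fin.last n), hrow, mul_add, add_mul, ite_mul, zero_mul, mul_ite,
      mul_zero, sum_add_distrib, sum_ite_eq', mem_univ, if_true, ih,
      submatrix_last_last_scalar_sub_companion, det_submatrix_last_zero_scalar_sub_companion,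
      Fin.sum_univ_castSucc (f := fun i => a i * x ^ (n + 1 - 1 - (i : ℕ)))]
    simp only [Fin.val_last, Fin.val_zero, Fin.val_castSucc, add_zero,
      Even.neg_one_pow ⟨n, rfl⟩, one_mul, Function.comp_apply, mul_sum, hshift,
      Nat.add_sub_cancel, Nat.sub_self, pow_zero, mul_one]
    linear_combination a (Fin.last n) * hsign

theorem charpoly_companion (n : ℕ) (a : Fin n → R) :
    (companion n a).charpoly = X ^ n + ∑ i : Fin n, C (a i) * X ^ (n - 1 - (i : ℕ)) := by
  rw [charpoly, charmatrix, companion_map, det_scalar_sub_companion]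
  rfl

theorem coeff_charpoly_companion {n : ℕ} (a : Fin n → R) (i : Fin n) :
    (companion n a).charpoly.coeff (n - 1 - i) = a i := by
  rw [charpoly_companion, coeff_add, coeff_X_pow, if_neg (by omega), zero_add, finsetSum_coeff,
    sum_eq_single i (fun j _ hj => by rw [coeff_C_mul_X_pow, if_neg (by omega)]) (by simp)]
  simp

end Companion

theorem norm_coeff_prod_X_sub_C_le {K ι : Type*} [NormedField K] [Fintype ι] (lam : ι → K)
    {r : ℝ} (hlam : ∀ j, ‖lam j‖ ≤ r) {i : ℕ} (hi : i ≤ Fintype.card ι) :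
    ‖(∏ j, (X - C (lam j))).coeff (Fintype.card ι - i)‖ ≤
      (Fintype.card ι).choose i * r ^ i := by
  have hdeg : (∏ j, (X - C (lam j))).natDegree = Fintype.card ι := by simp
  have hroots : ∀ z ∈ ((∏ j, (X - C (lam j))).map (RingHom.id K)).roots, ‖z‖ ≤ r := by
    intro z hz
    rw [Polynomial.map_id, mem_roots (Monic.ne_zero (monic_prod_of_monic _ _
      fun j _ => monic_X_sub_C (lam j))), IsRoot, eval_prod, prod_eq_zero_iff] at hz
    obtain ⟨j, -, hj⟩ := hz
    rw [eval_sub, eval_X, eval_C, sub_eq_zero] at hj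
    exact hj ▸ hlam j
  have := coeff_le_of_roots_le (Fintype.card ι - i)
    (monic_prod_of_monic _ _ fun j _ => monic_X_sub_C (lam j))
    (by rw [Polynomial.map_id]; exact Splits.prod fun j _ => Splits.X_sub_C (lam j)) hroots
  rwa [Polynomial.map_id, hdeg, Nat.sub_sub_self hi, Nat.choose_symm hi, mul_comm] at this

theorem norm_coeff_X_mul_prod_X_sub_C_le {K ι : Type*} [NormedField K] [Fintype ι]
    (lam : ι → K) {r : ℝ} (hlam : ∀ j, ‖lam j‖ ≤ r) {i : ℕ} (hi : i ≤ Fintype.card ι) :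
    ‖(X * ∏ j, (X - C (lam j))).coeff (Fintype.card ι - i)‖ ≤
      (Fintype.card ι).choose (i + 1) * r ^ (i + 1) := by
  rcases hi.lt_or_eq with hi | rfl
  · rw [show Fintype.card ι - i = Fintype.card ι - (i + 1) + 1 by omega, coeff_X_mul]
    exact norm_coeff_prod_X_sub_C_le lam hlam hi
  · simp

section SpecA

variable {n : ℕ} {M : Matrix (Fin n) (Fin n) ℝ} {ρ r : ℝ}

theorem specA.ofReal_eval_charpoly (h : specA n M ρ r) (x : ℝ) :
    ∃ lam : Fin (n - 1) → ℂ, (∀ j, ‖lam j‖ ≤ r) ∧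
      ((M.charpoly.eval x : ℝ) : ℂ) = (x - ρ) * ∏ j, ((x : ℂ) - lam j) := by
  obtain ⟨lam, hlam, hfac⟩ := h
  refine ⟨lam, hlam, ?_⟩
  have := congrArg (eval (x : ℂ)) hfac
  rw [eval_map, ← Complex.coe_algebraMap, eval₂_at_apply] at this
  simpa [eval_prod] using this

theorem specA.isRoot_charpoly (h : specA n M ρ r) : M.charpoly.IsRoot ρ := by
  obtain ⟨lam, -, heval⟩ := h.ofReal_eval_charpoly ρ
  rwa [sub_self, zero_mul, Complex.ofReal_eq_zero] at heval

theorem specA.det_one_sub_ne_zero (h : specA n M ρ r) (hr : r < 1) (hρ : ρ ≠ 1) :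
    (1 - M).det ≠ 0 := by
  obtain ⟨lam, hlam, heval⟩ := h.ofReal_eval_charpoly 1
  rw [eval_charpoly, map_one] at heval
  intro hdet
  rw [hdet, Complex.ofReal_zero, eq_comm, mul_eq_zero, prod_eq_zero_iff] at heval
  rcases heval with hρ1 | ⟨j, -, hj⟩
  · exact hρ (by exact_mod_cast (sub_eq_zero.mp hρ1).symm)
  · have := hlam j
    rw [← sub_eq_zero.mp hj] at this
    simp at this
    linarith

theorem specA.abs_apply_le {a : Fin n → ℝ} (h : specA n (bcMat n a) ρ r) (i : Fin n) :
    |a i| ≤ (n - 1).choose (i + 1) * r ^ ((i : ℕ) + 1) +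
      |ρ| * ((n - 1).choose i * r ^ (i : ℕ)) := by
  obtain ⟨lam, hlam, hfac⟩ := h
  have hcoeff := congrArg (coeff · (n - 1 - i)) hfac
  simp only [coeff_map, bcMat_eq_companion, coeff_charpoly_companion, sub_mul, coeff_sub,
    coeff_C_mul] at hcoeff
  have hi : (i : ℕ) ≤ Fintype.card (Fin (n - 1)) := by simp; omega
  have hX := norm_coeff_X_mul_prod_X_sub_C_le lam hlam hi
  have hq := norm_coeff_prod_X_sub_C_le lam hlam hi
  simp only [Fintype.card_fin] at hX hq
  calc |a i| = ‖(algebraMap ℝ ℂ) (a i)‖ := by simp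
    _ ≤ _ := by
      rw [hcoeff]
      refine (norm_sub_le _ _).trans (add_le_add hX ?_)
      rw [norm_mul, Complex.norm_real, Real.norm_eq_abs]
      exact mul_le_mul_of_nonneg_left hq (abs_nonneg ρ)

end SpecA

theorem one_add_pow_le_one_div_one_sub {m : ℕ} {r t : ℝ} (hr : 0 ≤ r) (h : m * r ≤ t)
    (ht : t < 1) : (1 + r) ^ m ≤ 1 / (1 - t) :=
  calc (1 + r) ^ m ≤ Real.exp r ^ m := by
        gcongr
        linarith [Real.add_one_le_exp r]
    _ = Real.exp (m * r) := (Real.exp_nat_mul r m).symm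
    _ ≤ Real.exp t := Real.exp_le_exp.mpr h
    _ ≤ 1 / (1 - t) := Real.exp_bound_div_one_sub_of_interval (le_trans (by positivity) h) ht

theorem sum_fin_choose_mul_pow_le (n : ℕ) (r : ℝ) :
    ∑ i : Fin n, ((n - 1).choose i : ℝ) * r ^ (i : ℕ) ≤ (1 + r) ^ (n - 1) := by
  cases n with
  | zero => simp
  | succ m =>
    rw [Fin.sum_univ_eq_sum_range (fun i => ((m + 1 - 1).choose i : ℝ) * r ^ i), add_comm 1 r,
      add_pow]
    simp [mul_comm]

theorem choose_succ_mul_pow_succ_le (m i : ℕ) {r : ℝ} (hr : 0 ≤ r) :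
    (m.choose (i + 1) : ℝ) * r ^ (i + 1) ≤ m.choose i * r ^ i * (m * r) := by
  have hchoose : m.choose (i + 1) ≤ m.choose i * m :=
    calc m.choose (i + 1) ≤ m.choose (i + 1) * (i + 1) := Nat.le_mul_of_pos_right _ (by omega)
      _ = m.choose i * (m - i) := Nat.choose_succ_right_eq m i
      _ ≤ m.choose i * m := Nat.mul_le_mul_left _ (Nat.sub_le m i)
  calc (m.choose (i + 1) : ℝ) * r ^ (i + 1) ≤ ((m.choose i * m : ℕ) : ℝ) * r ^ (i + 1) := by
        gcongr
    _ = m.choose i * r ^ i * (m * r) := by push_cast; ring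

theorem uvec_vecMul_bcMat {n : ℕ} {a : Fin n → ℝ} {α : ℝ}
    (h : (bcMat n a).charpoly.IsRoot α) :
    uvec n α ᵥ* bcMat n a = α • uvec n α := by
  have heig : α ^ n + ∑ i : Fin n, a i * α ^ (n - 1 - (i : ℕ)) = 0 := by
    simpa [IsRoot, bcMat_eq_companion, charpoly_companion, eval_finsetSum] using h
  funext j
  simp only [vecMul, dotProduct, bcMat, of_apply, uvec, mul_add, mul_ite, mul_zero, mul_one,
    sum_add_distrib, Pi.smul_apply, smul_eq_mul]
  rcases Nat.eq_zero_or_pos (j : ℕ) with hj | hj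
  · have hsup : ∑ i : Fin n, (if (j : ℕ) = i + 1 then α ^ (n - 1 - (i : ℕ)) else 0) = 0 :=
      sum_eq_zero fun i _ => if_neg (by omega)
    rw [hsup, add_zero]
    simp only [hj, if_true, Nat.sub_zero, ← pow_succ', Nat.sub_add_cancel (by omega : 1 ≤ n)]
    simp only [mul_comm (α ^ _), neg_mul, sum_neg_distrib]
    linarith
  · have hcol :
        ∑ i : Fin n, (if (j : ℕ) = 0 then α ^ (n - 1 - (i : ℕ)) * -a i else 0) = 0 :=
      sum_eq_zero fun i _ => if_neg (by omega)
    rw [hcol, zero_add, sum_eq_single ⟨j - 1, by omega⟩ (fun i _ hi => if_neg fun h =>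
      hi (Fin.ext (by simp; omega))) (by simp), if_pos (by simp; omega), ← pow_succ']
    congr 1
    simp
    omega

theorem mulVec_inv_one_sub_add {R ι : Type*} [CommRing R] [Fintype ι] [DecidableEq ι]
    {M : Matrix ι ι R} (h : IsUnit (1 - M).det) (v : ι → R) :
    M *ᵥ ((1 - M)⁻¹ *ᵥ v) + v = (1 - M)⁻¹ *ᵥ v := by
  have hv : (1 - M) *ᵥ ((1 - M)⁻¹ *ᵥ v) = v := by
    rw [mulVec_mulVec, mul_nonsing_inv _ h, one_mulVec]
  nth_rewrite 2 [← hv]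
  rw [sub_mulVec, one_mulVec]
  abel

section Hyperplane

variable {n : ℕ} {a : Fin n → ℝ} {α : ℝ}

theorem mem_Eset_iff {x : Fin n → ℝ} :
    x ∈ Eset n a α ↔ uvec n α ⬝ᵥ x = uvec n α ⬝ᵥ Ypt n a := by
  simp only [Eset, Set.mem_ofPred_eq, mul_sub, sum_sub_distrib, sub_eq_zero, dotProduct]

theorem uvec_dotProduct_bcVec (hn : 1 ≤ n) : uvec n α ⬝ᵥ bcVec n = α ^ (n - 1) := by
  rw [dotProduct, sum_eq_single ⟨0, hn⟩
    (fun i _ hi => by simp [bcVec, show (i : ℕ) ≠ 0 from fun h => hi (Fin.ext h)]) (by simp)]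
  simp [uvec, bcVec]

variable (hroot : (bcMat n a).charpoly.IsRoot α) (hdet : IsUnit (1 - bcMat n a).det)
include hroot hdet

theorem uvec_dotProduct_Ypt (hn : 1 ≤ n) (hα : α ≠ 1) :
    uvec n α ⬝ᵥ Ypt n a = α ^ (n - 1) / (1 - α) := by
  have hfix : bcMat n a *ᵥ Ypt n a + bcVec n = Ypt n a := mulVec_inv_one_sub_add hdet _
  replace hfix := congrArg (uvec n α ⬝ᵥ ·) hfix
  simp only [dotProduct_add, dotProduct_mulVec, uvec_vecMul_bcMat hroot, smul_dotProduct,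
    smul_eq_mul, uvec_dotProduct_bcVec hn] at hfix
  rw [eq_div_iff (sub_ne_zero.mpr hα.symm)]
  linarith

theorem bcMat_mulVec_add_bcVec_mem_Eset {x : Fin n → ℝ} (hx : x ∈ Eset n a α) :
    bcMat n a *ᵥ x + bcVec n ∈ Eset n a α := by
  have hfix : bcMat n a *ᵥ Ypt n a + bcVec n = Ypt n a := mulVec_inv_one_sub_add hdet _
  rw [mem_Eset_iff] at hx ⊢
  rw [← hfix]
  simp only [dotProduct_add, dotProduct_mulVec, uvec_vecMul_bcMat hroot, smul_dotProduct, hx]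

end Hyperplane

theorem bcMat_mulVec_add_bcVec_apply {n : ℕ} (hn : 0 < n) (a x : Fin n → ℝ) (i : Fin n)
    (hi : 1 ≤ (i : ℕ)) :
    (bcMat n a *ᵥ x + bcVec n) i =
      -a i * x ⟨0, hn⟩ + if h : (i : ℕ) + 1 < n then x ⟨i + 1, h⟩ else 0 := by
  simp only [Pi.add_apply, bcVec, if_neg (by omega : (i : ℕ) ≠ 0), add_zero, mulVec, dotProduct,
    bcMat, of_apply, add_mul, ite_mul, zero_mul, one_mul, sum_add_distrib]
  congr 1
  · rw [sum_eq_single ⟨0, hn⟩ (fun j _ hj => if_neg fun h => hj (Fin.ext h)) (by simp)]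
    simp
  · split_ifs with h
    · rw [sum_eq_single ⟨i + 1, h⟩ (fun j _ hj => if_neg fun h' => hj (Fin.ext h')) (by simp)]
      simp
    · exact sum_eq_zero fun j _ => if_neg (by omega)

theorem bcf_of_nonpos {n : ℕ} (hn : 0 < n) (aL aR x : Fin n → ℝ) (hx : x ⟨0, hn⟩ ≤ 0) :
    bcf n aL aR x = bcMat n aL *ᵥ x + bcVec n :=
  if_pos fun i hi => (congrArg x (Fin.ext hi : i = ⟨0, hn⟩)).trans_le hx

section Slab

variable {n : ℕ} {α r : ℝ}

theorem abs_sum_erase_uvec_mul_le (hα : 1 < α) (hr : 0 ≤ r)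
    (hrn : r * ((n : ℝ) - 1) ≤ 1 / 10) (hn : 0 < n) {x : Fin n → ℝ} (hx : x ∈ Hset n α r) :
    |∑ i ∈ univ.erase ⟨0, hn⟩, uvec n α i * x i| ≤ 2 / 9 * (α ^ (n - 1) / (α - 1)) := by
  set W := 2 * α ^ (n - 1) / (α - 1)
  have hterm : ∀ i ∈ univ.erase (⟨0, hn⟩ : Fin n),
      |uvec n α i * x i| ≤ W * (((n - 1).choose i : ℝ) * r ^ (i : ℕ)) := by
    intro i hi
    have hi : 1 ≤ (i : ℕ) := by
      have : (i : ℕ) ≠ 0 := fun h => (mem_erase.mp hi).1 (Fin.ext h)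
      omega
    have hu : uvec n α i * (2 * α / (α - 1)) ≤ W := by
      rw [uvec, mul_div_assoc', mul_left_comm, ← pow_succ]
      unfold W
      gcongr 2 * ?_ / _
      exact pow_le_pow_right₀ hα.le (by omega)
    rw [abs_mul, abs_of_pos (by unfold uvec; positivity)]
    calc uvec n α i * |x i|
        ≤ uvec n α i * (2 * α / (α - 1) * ((n - 1).choose i * r ^ (i : ℕ))) := by
          gcongr
          · unfold uvec; positivity
          · rw [← mul_assoc]; exact hx i hi
      _ ≤ _ := by rw [← mul_assoc]; gcongr
  have hsum :
      ∑ i ∈ univ.erase (⟨0, hn⟩ : Fin n), ((n - 1).choose i : ℝ) * r ^ (i : ℕ) ≤ 1 / 9 := by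
    have htotal := (sum_fin_choose_mul_pow_le n r).trans (one_add_pow_le_one_div_one_sub hr
      (t := 1 / 10) (by push_cast [Nat.cast_sub hn]; linarith) (by norm_num))
    rw [← add_sum_erase _ _ (mem_univ (⟨0, hn⟩ : Fin n))] at htotal
    norm_num at htotal ⊢
    linarith
  calc |∑ i ∈ univ.erase (⟨0, hn⟩ : Fin n), uvec n α i * x i|
      ≤ ∑ i ∈ univ.erase (⟨0, hn⟩ : Fin n), W * ((n - 1).choose i * r ^ (i : ℕ)) :=
        (abs_sum_le_sum_abs _ _).trans (sum_le_sum hterm)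
    _ ≤ W * (1 / 9) := by
        rw [← mul_sum]
        gcongr
    _ = 2 / 9 * (α ^ (n - 1) / (α - 1)) := by ring

theorem isVertexP.mem_Hset {a : Fin n → ℝ} {s : Fin (n - 1) → ℝ} {P : Fin n → ℝ}
    (hP : isVertexP n a α r s P) (hs : ∀ j, s j = 1 ∨ s j = -1) (hα : 1 < α) (hr : 0 ≤ r) :
    P ∈ Hset n α r := by
  intro i hi
  have hM : 0 ≤ 2 * α / (α - 1) * ((n - 1).choose i : ℝ) * r ^ (i : ℕ) := by
    have : 0 < α - 1 := by linarith
    positivity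
  rw [hP.2 i hi, abs_mul, abs_of_nonneg hM]
  rcases hs ⟨(i : ℕ) - 1, by omega⟩ with h | h <;> simp [h]

theorem mem_interior_Hset {x : Fin n → ℝ}
    (h : ∀ i : Fin n, 1 ≤ (i : ℕ) →
      |x i| < 2 * α / (α - 1) * ((n - 1).choose (i : ℕ) : ℝ) * r ^ (i : ℕ)) :
    x ∈ interior (Hset n α r) := by
  rw [mem_interior_iff_mem_nhds]
  have hev : ∀ᶠ y in 𝓝 x, ∀ i : Fin n, 1 ≤ (i : ℕ) →
      |y i| < 2 * α / (α - 1) * ((n - 1).choose (i : ℕ) : ℝ) * r ^ (i : ℕ) := by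
    refine eventually_all.2 fun i => ?_
    by_cases hi : 1 ≤ (i : ℕ)
    · exact (((continuous_apply i).abs.tendsto x).eventually (gt_mem_nhds (h i hi))).mono
        fun y hy _ => hy
    · exact Eventually.of_forall fun y hi' => absurd hi' hi
  filter_upwards [hev] with y hy i hi using (hy i hi).le

end Slab

section Estimates

variable {n : ℕ} {a : Fin n → ℝ} {α r : ℝ}

theorem abs_apply_zero_add_inv_le (hroot : (bcMat n a).charpoly.IsRoot α)
    (hdet : IsUnit (1 - bcMat n a).det) (hα : 1 < α) (hr : 0 ≤ r)
    (hrn : r * ((n : ℝ) - 1) ≤ 1 / 10) (hn : 0 < n) {x : Fin n → ℝ}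
    (hx : x ∈ Eset n a α ∩ Hset n α r) :
    |x ⟨0, hn⟩ + (α - 1)⁻¹| ≤ 2 / 9 * (α - 1)⁻¹ := by
  set T := ∑ i ∈ univ.erase (⟨0, hn⟩ : Fin n), uvec n α i * x i
  have hsplit : uvec n α ⬝ᵥ x = α ^ (n - 1) * x ⟨0, hn⟩ + T := by
    rw [dotProduct, ← add_sum_erase _ _ (mem_univ (⟨0, hn⟩ : Fin n))]
    rfl
  have hE := (mem_Eset_iff.mp hx.1).trans (uvec_dotProduct_Ypt hroot hdet hn hα.ne')
  have hkey : α ^ (n - 1) * (x ⟨0, hn⟩ + (α - 1)⁻¹) = -T := by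
    have : α ^ (n - 1) / (1 - α) = -(α ^ (n - 1) * (α - 1)⁻¹) := by
      rw [div_eq_mul_inv, ← neg_sub, inv_neg, mul_neg]
    linarith
  have hpow : 0 < α ^ (n - 1) := by positivity
  rw [← mul_le_mul_iff_of_pos_left hpow, ← abs_of_pos hpow, ← abs_mul, hkey, abs_neg,
    abs_of_pos hpow]
  calc |T| ≤ 2 / 9 * (α ^ (n - 1) / (α - 1)) := abs_sum_erase_uvec_mul_le hα hr hrn hn hx.2
    _ = α ^ (n - 1) * (2 / 9 * (α - 1)⁻¹) := by ring

theorem abs_bcMat_mulVec_add_bcVec_apply_lt (hspec : specA n (bcMat n a) α r) (hα : 1 < α)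
    (hr : 0 < r) (hrn : r * ((n : ℝ) - 1) ≤ 1 / 10) (hn : 0 < n) {x : Fin n → ℝ}
    (hx : x ∈ Hset n α r) (hx0 : |x ⟨0, hn⟩| ≤ 11 / 9 * (α - 1)⁻¹) (i : Fin n)
    (hi : 1 ≤ (i : ℕ)) :
    |(bcMat n a *ᵥ x + bcVec n) i| <
      2 * α / (α - 1) * ((n - 1).choose (i : ℕ) : ℝ) * r ^ (i : ℕ) := by
  set D : ℝ := (n - 1).choose i * r ^ (i : ℕ)
  set Q : ℝ := (n - 1).choose (i + 1) * r ^ ((i : ℕ) + 1)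
  have hk : 0 < (α - 1)⁻¹ := inv_pos.mpr (by linarith)
  have hD : 0 < D := by
    have : 0 < (n - 1).choose i := Nat.choose_pos (by omega)
    positivity
  have hQD : Q ≤ D / 10 := by
    have hmr : ((n - 1 : ℕ) : ℝ) * r ≤ 1 / 10 := by push_cast [Nat.cast_sub hn]; linarith
    calc Q ≤ D * ((n - 1 : ℕ) * r) := choose_succ_mul_pow_succ_le (n - 1) i hr.le
      _ ≤ D / 10 := by nlinarith
  have ha : |a i| ≤ Q + α * D := by
    simpa [abs_of_pos (by linarith : 0 < α)] using hspec.abs_apply_le i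
  have hnext :
      |if h : (i : ℕ) + 1 < n then x ⟨i + 1, h⟩ else 0| ≤ 2 * α * (α - 1)⁻¹ * Q := by
    split_ifs with h
    · simpa [D, Q, mul_assoc, div_eq_mul_inv] using hx ⟨i + 1, h⟩ (by simp)
    · simp only [abs_zero]
      positivity
  rw [bcMat_mulVec_add_bcVec_apply hn a x i hi]
  calc |-a i * x ⟨0, hn⟩ + if h : (i : ℕ) + 1 < n then x ⟨i + 1, h⟩ else 0|
      ≤ |a i| * |x ⟨0, hn⟩| + 2 * α * (α - 1)⁻¹ * Q := by
        refine (abs_add_le _ _).trans (add_le_add ?_ hnext)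
        rw [abs_mul, abs_neg]
    _ ≤ (Q + α * D) * (11 / 9 * (α - 1)⁻¹) + 2 * α * (α - 1)⁻¹ * Q := by gcongr
    _ < 2 * α * (α - 1)⁻¹ * D := by
        -- with `Q ≤ D / 10`, the left side below is at most `(11/90 + 64 α / 45) D`
        have : (Q + α * D) * (11 / 9) + 2 * α * Q < 2 * α * D := by nlinarith
        nlinarith
    _ = 2 * α / (α - 1) * ((n - 1).choose (i : ℕ) : ℝ) * r ^ (i : ℕ) := by ring

end Estimates

/-- Under Assumption (A) and `r(n−1) ≤ 1/10`, each vertex `P^(s)` has negative first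
component and maps under `f` into `E ∩ int(H)`. -/
theorem stmt_7 (n : ℕ) (hn : 2 ≤ n) (aL aR : Fin n → ℝ) (α β r : ℝ)
    (hA : assumptionA n aL aR α β r)
    (hrn : r * ((n : ℝ) - 1) ≤ 1 / 10)
    (s : Fin (n - 1) → ℝ) (hs : ∀ j, s j = 1 ∨ s j = -1)
    (P : Fin n → ℝ) (hP : isVertexP n aL α r s P) :
    P ⟨0, by omega⟩ < 0 ∧
    bcf n aL aR P ∈ Eset n aL α ∩ interior (Hset n α r) := by
  obtain ⟨hα, -, hr, hr1, hspec, -⟩ := hA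
  have hroot := hspec.isRoot_charpoly
  have hdet := isUnit_iff_ne_zero.mpr (hspec.det_one_sub_ne_zero hr1 hα.ne')
  have hPEH : P ∈ Eset n aL α ∩ Hset n α r := ⟨hP.1, hP.mem_Hset hs hα hr.le⟩
  have hP0 := abs_apply_zero_add_inv_le hroot hdet hα hr.le hrn (by omega) hPEH
  have hk : 0 < (α - 1)⁻¹ := inv_pos.mpr (by linarith)
  have hneg : P ⟨0, by omega⟩ < 0 := by
    linarith [le_abs_self (P ⟨0, by omega⟩ + (α - 1)⁻¹)]
  refine ⟨hneg, ?_⟩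
  rw [bcf_of_nonpos (by omega) aL aR P hneg.le]
  refine ⟨bcMat_mulVec_add_bcVec_mem_Eset hroot hdet hP.1, mem_interior_Hset fun i hi => ?_⟩
  refine abs_bcMat_mulVec_add_bcVec_apply_lt hspec hα hr hrn (by omega) hPEH.2 ?_ i hi
  rw [abs_of_neg hneg]
  linarith [neg_abs_le (P ⟨0, by omega⟩ + (α - 1)⁻¹)]
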